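/- For every t, θ ∈ ℝ one has det K(t,θ) = e^{2t} ≠ 0, and for every τ, θ ∈ ℝ the matrix-valued function Y(t,τ,θ) = K(t,θ) · K(τ,θ)⁻¹ satisfies dY/dt(t,τ,θ) = Dψ(x₀(t+θ)) · Y(t,τ,θ) together with the initial condition Y(τ,τ,θ) = I. -/

import Mathlib

open Real Matrix

/-- `x₀(θ) = (sin θ, cos θ)`. -/
noncomputable def x0 (θ : ℝ) : Fin 2 → ℝ := ![Real.sin θ, Real.cos θ]

/-- `K(t,θ)` is the `2×2` matrix with rows `(cos(t+θ), e^{2t} sin(t+θ))` and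
`(−sin(t+θ), e^{2t} cos(t+θ))`. -/
noncomputable def K (t θ : ℝ) : Matrix (Fin 2) (Fin 2) ℝ :=
  !![Real.cos (t + θ), Real.exp (2 * t) * Real.sin (t + θ);
     -Real.sin (t + θ), Real.exp (2 * t) * Real.cos (t + θ)]

/-- `Dψ(x₀(a))`: the Jacobian matrix of `ψ` at `x₀(a)`, i.e. the `2×2` matrix with rows
`(2sin²a, 2 sin a cos a + 1)` and `(2 sin a cos a − 1, 2cos²a)`. -/
noncomputable def DpsiX0 (a : ℝ) : Matrix (Fin 2) (Fin 2) ℝ :=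
  !![2 * Real.sin a ^ 2, 2 * Real.sin a * Real.cos a + 1;
     2 * Real.sin a * Real.cos a - 1, 2 * Real.cos a ^ 2]

/-- `Y(t,τ,θ) = K(t,θ)·K(τ,θ)⁻¹`. -/
noncomputable def Y (t τ θ : ℝ) : Matrix (Fin 2) (Fin 2) ℝ := K t θ * (K τ θ)⁻¹

/-!
The columns of `K(·, θ)` are `ẋ₀(t + θ)` and `e^{2t} x₀(t + θ)`, solutions of the variational
equation along the unit circle; right multiplication by the constant matrix `K(τ, θ)⁻¹`
(which exists because `det K = e^{2t}`) keeps solutions and normalizes the value at `τ` to `I`.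
-/

theorem Matrix.hasDerivAt_mul_const_apply {n m p : Type*} [Fintype m]
    {A : ℝ → Matrix n m ℝ} {A' : Matrix n m ℝ} {t : ℝ}
    (hA : ∀ i j, HasDerivAt (fun s => A s i j) (A' i j) t) (C : Matrix m p ℝ) (i : n) (j : p) :
    HasDerivAt (fun s => (A s * C) i j) ((A' * C) i j) t := by
  simp only [mul_apply]
  exact HasDerivAt.fun_sum fun k _ => (hA i k).mul_const (C k j)

theorem K_det (t θ : ℝ) : (K t θ).det = exp (2 * t) := by
  rw [K, det_fin_two_of]
  linear_combination exp (2 * t) * sin_sq_add_cos_sq (t + θ)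

theorem hasDerivAt_K_apply (θ t : ℝ) (i j : Fin 2) :
    HasDerivAt (fun s => K s θ i j) ((DpsiX0 (t + θ) * K t θ) i j) t := by
  have hs : HasDerivAt (fun s => sin (s + θ)) (cos (t + θ)) t := by
    simpa using ((hasDerivAt_id t).add_const θ).sin
  have hc : HasDerivAt (fun s => cos (s + θ)) (-sin (t + θ)) t := by
    simpa using ((hasDerivAt_id t).add_const θ).cos
  have he : HasDerivAt (fun s => exp (2 * s)) (exp (2 * t) * 2) t := by
    simpa using ((hasDerivAt_id t).const_mul 2).exp
  have hpyth := sin_sq_add_cos_sq (t + θ)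
  fin_cases i <;> fin_cases j <;> simp [K, DpsiX0, mul_apply, Fin.sum_univ_two]
  · exact hc.congr_deriv (by ring)
  · exact (he.mul hs).congr_deriv
      (by linear_combination (-2 * exp (2 * t) * sin (t + θ)) * hpyth)
  · exact hs.neg.congr_deriv (by ring)
  · exact (he.mul hc).congr_deriv
      (by linear_combination (-2 * exp (2 * t) * cos (t + θ)) * hpyth)

/-- formula (39) of the paper.  For every `t, θ ∈ ℝ` one has
`det K(t,θ) = e^{2t} ≠ 0`, and for every `τ, θ ∈ ℝ` the matrix-valued function
`Y(t,τ,θ) = K(t,θ)·K(τ,θ)⁻¹` satisfies `dY/dt(t,τ,θ) = Dψ(x₀(t+θ)) · Y(t,τ,θ)`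
(stated entrywise) together with the initial condition `Y(τ,τ,θ) = I`. -/
theorem stmt12 :
    (∀ t θ : ℝ, (K t θ).det = Real.exp (2 * t) ∧ Real.exp (2 * t) ≠ 0) ∧
    ∀ τ θ : ℝ,
      (∀ t : ℝ, ∀ i j : Fin 2,
        HasDerivAt (fun t => Y t τ θ i j) ((DpsiX0 (t + θ) * Y t τ θ) i j) t) ∧
      Y τ τ θ = 1 := by
  refine ⟨fun t θ => ⟨K_det t θ, exp_ne_zero _⟩, fun τ θ => ⟨fun t i j => ?_, ?_⟩⟩
  · rw [Y, ← Matrix.mul_assoc]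
    exact hasDerivAt_mul_const_apply (hasDerivAt_K_apply θ t) (K τ θ)⁻¹ i j
  · exact mul_nonsing_inv _ (by rw [K_det]; exact (exp_ne_zero _).isUnit)
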